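/- Let d ≥ 1, let μ be a compactly supported probability measure on ℝ^d, and let t ∈ (0,1). Let tμ denote the pushforward of μ under the map y ↦ t·y, and define f_t(x) := dist²_{tμ}(x, 1-t) - (1-t)‖x‖². Then f_t is differentiable on ℝ^d and the ideal velocity field v*_t(x) := (m_t(x) - x)/(1-t), with m_t(x) := (∫ x₁ exp(-‖x - t x₁‖²/(2(1-t)²)) dμ(x₁)) / (∫ exp(-‖x - t x₁‖²/(2(1-t)²)) dμ(x₁)), satisfies v*_t(x) = -(1/(2t(1-t))) ∇_x f_t(x) for every x ∈ ℝ^d. -/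

import Mathlib

open MeasureTheory Real Set

/-- The topological support of a measure. -/
def mSupport {α : Type*} [TopologicalSpace α] [MeasurableSpace α]
    (μ : Measure α) : Set α :=
  {x | ∀ U ∈ nhds x, 0 < μ U}

/-- The smoothed squared-distance
`dist²_μ(x, σ) = -2σ² log(∫ exp(-‖y - x‖²/(2σ²)) dμ(y))`. -/
noncomputable def smDist2 {d : ℕ} (μ : Measure (EuclideanSpace ℝ (Fin d)))
    (x : EuclideanSpace ℝ (Fin d)) (σ : ℝ) : ℝ :=
  -2 * σ ^ 2 * Real.log (∫ y, Real.exp (-‖y - x‖ ^ 2 / (2 * σ ^ 2)) ∂μ)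

/-- The Gaussian weight integral `∫ exp(-‖x - t x₁‖²/(2(1-t)²)) dμ(x₁)`. -/
noncomputable def gaussWeight {d : ℕ} (μ : Measure (EuclideanSpace ℝ (Fin d)))
    (t : ℝ) (x : EuclideanSpace ℝ (Fin d)) : ℝ :=
  ∫ x₁, Real.exp (-‖x - t • x₁‖ ^ 2 / (2 * (1 - t) ^ 2)) ∂μ

/-- The posterior mean `m_t(x)`. -/
noncomputable def postMean {d : ℕ} (μ : Measure (EuclideanSpace ℝ (Fin d)))
    (t : ℝ) (x : EuclideanSpace ℝ (Fin d)) : EuclideanSpace ℝ (Fin d) :=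
  (gaussWeight μ t x)⁻¹ •
    ∫ x₁, Real.exp (-‖x - t • x₁‖ ^ 2 / (2 * (1 - t) ^ 2)) • x₁ ∂μ

/-- The ideal velocity field `v*_t(x) = (m_t(x) - x)/(1 - t)`. -/
noncomputable def idealVel {d : ℕ} (μ : Measure (EuclideanSpace ℝ (Fin d)))
    (t : ℝ) (x : EuclideanSpace ℝ (Fin d)) : EuclideanSpace ℝ (Fin d) :=
  (1 - t)⁻¹ • (postMean μ t x - x)

/-- The homotopy objective `f_t(x) = dist²_{tμ}(x, 1-t) - (1-t)‖x‖²`, where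
`tμ` is the pushforward of `μ` under `y ↦ t • y`. -/
noncomputable def homotopyObj {d : ℕ} (μ : Measure (EuclideanSpace ℝ (Fin d)))
    (t : ℝ) (x : EuclideanSpace ℝ (Fin d)) : ℝ :=
  smDist2 (Measure.map (fun y => t • y) μ) x (1 - t) - (1 - t) * ‖x‖ ^ 2

lemma key_bound {σ : ℝ} (hσ : 0 < σ) {r : ℝ} (hr : 0 ≤ r) :
    r * Real.exp (-r ^ 2 / (2 * σ ^ 2)) ≤ σ := by
  have ha : (0:ℝ) ≤ r ^ 2 / (2 * σ ^ 2) := by positivity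
  have h1 : r ≤ σ * Real.exp (r ^ 2 / (2 * σ ^ 2)) := by
    have h2 := mul_le_mul_of_nonneg_left (Real.add_one_le_exp (r ^ 2 / (2 * σ ^ 2))) hσ.le
    have h3 : σ * (r ^ 2 / (2 * σ ^ 2) + 1) = r ^ 2 / (2 * σ) + σ := by
      field_simp
    have h4 : r ≤ r ^ 2 / (2 * σ) + σ := by
      rw [div_add' _ _ _ (by positivity), le_div_iff₀ (by positivity)]
      nlinarith [sq_nonneg (r - σ)]
    calc r ≤ r ^ 2 / (2 * σ) + σ := h4
    _ = σ * (r ^ 2 / (2 * σ ^ 2) + 1) := h3.symm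
    _ ≤ σ * Real.exp (r ^ 2 / (2 * σ ^ 2)) := h2
  have he : Real.exp (-r ^ 2 / (2 * σ ^ 2)) = (Real.exp (r ^ 2 / (2 * σ ^ 2)))⁻¹ := by
    rw [← Real.exp_neg]; ring_nf
  rw [he]
  have hep : (0:ℝ) < Real.exp (r ^ 2 / (2 * σ ^ 2)) := Real.exp_pos _
  calc r * (Real.exp (r ^ 2 / (2 * σ ^ 2)))⁻¹
      ≤ σ * Real.exp (r ^ 2 / (2 * σ ^ 2)) * (Real.exp (r ^ 2 / (2 * σ ^ 2)))⁻¹ :=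
        mul_le_mul_of_nonneg_right h1 (by positivity)
    _ = σ := by field_simp


open RealInnerProductSpace in
lemma kderiv {d : ℕ} (t : ℝ) (y x : EuclideanSpace ℝ (Fin d)) :
    HasFDerivAt (fun x : EuclideanSpace ℝ (Fin d) =>
      Real.exp (-‖x - t • y‖ ^ 2 / (2 * (1 - t) ^ 2)))
      ((-((1 - t) ^ 2)⁻¹ * Real.exp (-‖x - t • y‖ ^ 2 / (2 * (1 - t) ^ 2))) •
        innerSL ℝ (x - t • y)) x := by
  have hq : HasFDerivAt (fun x : EuclideanSpace ℝ (Fin d) => ‖x - t • y‖ ^ 2)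
      (2 • innerSL ℝ (x - t • y)) x := by
    simpa using ((hasFDerivAt_id x).sub_const (t • y)).norm_sq
  have hφ : HasFDerivAt (fun x : EuclideanSpace ℝ (Fin d) => -‖x - t • y‖ ^ 2 / (2 * (1 - t) ^ 2))
      ((-(2 * (1 - t) ^ 2)⁻¹ : ℝ) • (2 • innerSL ℝ (x - t • y))) x := by
    have := hq.const_mul (-(2 * (1 - t) ^ 2)⁻¹ : ℝ)
    refine this.congr_of_eventuallyEq (Filter.Eventually.of_forall fun x => ?_)
    · ring
  have := hφ.exp
  refine this.congr_fderiv ?_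
  ext z
  simp only [ContinuousLinearMap.smul_apply, smul_eq_mul, ContinuousLinearMap.coe_smul',
    mul_inv]
  ring

section main
open RealInnerProductSpace
variable {d : ℕ} (μ : Measure (EuclideanSpace ℝ (Fin d))) [IsProbabilityMeasure μ]

local notation "E" => EuclideanSpace ℝ (Fin d)

set_option synthInstance.maxHeartbeats 1000000 in
set_option maxHeartbeats 1000000 in
lemma main_grad (t : ℝ) (ht : t ∈ Ioo (0:ℝ) 1) (x : E) :
    HasGradientAt (fun x : E => -2 * (1 - t) ^ 2 *
        Real.log (∫ y, Real.exp (-‖x - t • y‖ ^ 2 / (2 * (1 - t) ^ 2)) ∂μ)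
        - (1 - t) * ‖x‖ ^ 2)
      ((2 * t) • (x - postMean μ t x)) x := by
  obtain ⟨ht0, ht1⟩ := ht
  set σ := 1 - t with hσdef
  have hσ : 0 < σ := by simp [hσdef]; linarith
  set K : E → E → ℝ := fun x y => Real.exp (-‖x - t • y‖ ^ 2 / (2 * σ ^ 2)) with hK
  have hKpos : ∀ x y, 0 < K x y := fun x y => Real.exp_pos _
  have hKle1 : ∀ x y, K x y ≤ 1 := by
    intro x y
    apply Real.exp_le_one_iff.2
    have : (0:ℝ) ≤ ‖x - t • y‖ ^ 2 / (2 * σ ^ 2) := by positivity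
    rw [neg_div]; linarith
  have hKy : ∀ r : E × E → ℝ, True := fun _ => trivial
  have hKcont : ∀ x, Continuous (fun y => K x y) := by
    intro x
    apply Real.continuous_exp.comp
    fun_prop
  have hKint : ∀ x, Integrable (fun y => K x y) μ := by
    intro x
    refine (integrable_const (1:ℝ)).mono' ((hKcont x).aestronglyMeasurable) ?_
    filter_upwards with y
    rw [Real.norm_eq_abs, abs_of_pos (hKpos x y)]
    exact hKle1 x y
  have hkey : ∀ x y : E, K x y * ‖x - t • y‖ ≤ σ := by
    intro x y
    simpa [hK, mul_comm] using key_bound hσ (norm_nonneg (x - t • y))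
  have hMint : ∀ x, Integrable (fun y => K x y • y) μ := by
    intro x
    refine (integrable_const ((σ + ‖x‖)/t)).mono'
      (((hKcont x).smul continuous_id).aestronglyMeasurable) ?_
    filter_upwards with y
    rw [norm_smul, Real.norm_eq_abs, abs_of_pos (hKpos x y)]
    rw [le_div_iff₀ ht0]
    have h1 : K x y * ‖y‖ * t = K x y * ‖t • y‖ := by
      rw [norm_smul, Real.norm_eq_abs, abs_of_pos ht0]; ring
    rw [h1]
    have h2 : ‖t • y‖ ≤ ‖x - t • y‖ + ‖x‖ := by
      have := norm_sub_le (x - t • y) x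
      simpa using this
    calc K x y * ‖t • y‖ ≤ K x y * (‖x - t • y‖ + ‖x‖) :=
          mul_le_mul_of_nonneg_left h2 (hKpos x y).le
      _ = K x y * ‖x - t • y‖ + K x y * ‖x‖ := by ring
      _ ≤ σ + 1 * ‖x‖ := add_le_add (hkey x y)
          (mul_le_mul_of_nonneg_right (hKle1 x y) (norm_nonneg x))
      _ = σ + ‖x‖ := by ring
  -- derivative of the weight integral
  set F' : E → E → (E →L[ℝ] ℝ) := fun x y =>
    (-(σ ^ 2)⁻¹ * K x y) • innerSL ℝ (x - t • y) with hF'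
  have hF'cont : ∀ x, Continuous (fun y => F' x y) := by
    intro x
    refine Continuous.smul (f := fun y => -(σ ^ 2)⁻¹ * K x y) (g := fun y => innerSL ℝ (x - t • y)) ?_ ?_
    · exact continuous_const.mul (hKcont x)
    · exact (innerSL ℝ).continuous.comp (by fun_prop)
  have hF'norm : ∀ x y, ‖F' x y‖ = (σ ^ 2)⁻¹ * K x y * ‖x - t • y‖ := by
    intro x y
    show ‖(-(σ ^ 2)⁻¹ * K x y) • innerSL ℝ (x - t • y)‖ = _
    rw [norm_smul (β := (EuclideanSpace ℝ (Fin d)) →L[ℝ] ℝ) _ (innerSL ℝ (x - t • y)),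
      innerSL_apply_norm, Real.norm_eq_abs, abs_mul, abs_neg, abs_inv,
      abs_of_pos (hKpos x y), abs_of_pos (by positivity : (0:ℝ) < σ ^ 2)]
  have hF'bound : ∀ x y, ‖F' x y‖ ≤ σ⁻¹ := by
    intro x y
    rw [hF'norm]
    calc (σ ^ 2)⁻¹ * K x y * ‖x - t • y‖ = (σ ^ 2)⁻¹ * (K x y * ‖x - t • y‖) := by ring
      _ ≤ (σ ^ 2)⁻¹ * σ := mul_le_mul_of_nonneg_left (hkey x y) (by positivity)
      _ = σ⁻¹ := by field_simp
  have hF'int : ∀ x, Integrable (fun y => F' x y) μ := by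
    intro x
    refine (integrable_const (σ⁻¹)).mono' ((hF'cont x).aestronglyMeasurable) ?_
    filter_upwards with y using hF'bound x y
  have hW : HasFDerivAt (fun x => ∫ y, K x y ∂μ) (∫ y, F' x y ∂μ) x := by
    apply hasFDerivAt_integral_of_dominated_of_fderiv_le (s := Metric.ball x 1) (Metric.ball_mem_nhds x one_pos)
    · filter_upwards with x' using (hKcont x').aestronglyMeasurable
    · exact hKint x
    · exact (hF'cont x).aestronglyMeasurable
    · filter_upwards with y
      exact fun x' _ => hF'bound x' y
    · exact integrable_const _
    · filter_upwards with y
      intro x' _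
      exact kderiv t y x'
  have hWpos : 0 < ∫ y, K x y ∂μ := by
    rw [integral_pos_iff_support_of_nonneg (fun y => (hKpos x y).le) (hKint x)]
    have hs : Function.support (fun y => K x y) = univ := by
      ext y; simp [Function.mem_support, (hKpos x y).ne']
    rw [hs]
    simp
  set B := ∫ y, K x y • y ∂μ with hB
  set G : E := (-(σ ^ 2)⁻¹) • ((∫ y, K x y ∂μ) • x - t • B) with hG
  have hDeq : (∫ y, F' x y ∂μ) = innerSL ℝ G := by
    apply ContinuousLinearMap.ext
    intro h
    rw [ContinuousLinearMap.integral_apply (hF'int x)]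
    have e1 : ∀ y, (F' x y) h
        = (-(σ ^ 2)⁻¹ * ⟪x, h⟫) * K x y
          - ((-(σ ^ 2)⁻¹) * t) * ((innerSL ℝ h) (K x y • y)) := by
      intro y
      show ((-(σ ^ 2)⁻¹ * K x y) • innerSL ℝ (x - t • y)) h = _
      simp only [ContinuousLinearMap.smul_apply, smul_eq_mul, innerSL_apply_apply,
        inner_sub_left, real_inner_smul_left, real_inner_smul_right, real_inner_comm y h]
      ring
    simp_rw [e1]
    rw [integral_sub ((hKint x).const_mul _)
        (((innerSL ℝ h).integrable_comp (hMint x)).const_mul _),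
      integral_const_mul, integral_const_mul,
      ContinuousLinearMap.integral_comp_comm _ (hMint x)]
    simp only [hG, innerSL_apply_apply, inner_sub_left, real_inner_smul_left,
      real_inner_comm h B]
    ring
  rw [hDeq] at hW
  have hlog : HasFDerivAt (fun x => Real.log (∫ y, K x y ∂μ))
      ((∫ y, K x y ∂μ)⁻¹ • innerSL ℝ G) x := hW.log hWpos.ne'
  have hnorm : HasFDerivAt (fun x : E => ‖x‖ ^ 2) (2 • innerSL ℝ x) x := by
    simpa using (hasStrictFDerivAt_norm_sq x).hasFDerivAt
  have hf : HasFDerivAt (fun x : E => -2 * σ ^ 2 * Real.log (∫ y, K x y ∂μ) - σ * ‖x‖ ^ 2)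
      ((-2 * σ ^ 2) • ((∫ y, K x y ∂μ)⁻¹ • innerSL ℝ G) - σ • (2 • innerSL ℝ x)) x :=
    ((hlog.const_mul (-2 * σ ^ 2)).sub (hnorm.const_mul σ))
  rw [hasGradientAt_iff_hasFDerivAt]
  refine hf.congr_fderiv ?_
  apply ContinuousLinearMap.ext
  intro h
  have hWne : (∫ y, K x y ∂μ) ≠ 0 := hWpos.ne'
  have hσne : σ ≠ 0 := hσ.ne'
  rw [show postMean μ t x = (∫ y, K x y ∂μ)⁻¹ • B from rfl]
  simp only [InnerProductSpace.toDual_apply_apply, hG, postMean, gaussWeight, ← hσdef,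
    ContinuousLinearMap.sub_apply, ContinuousLinearMap.smul_apply, innerSL_apply_apply,
    real_inner_smul_left, inner_sub_left, smul_eq_mul, two_smul,
    ContinuousLinearMap.add_apply]
  field_simp
  rw [hσdef]
  ring

end main

/-- For a compactly supported probability measure `μ` on `ℝ^d` and `t ∈ (0,1)`,
the objective `f_t` is differentiable and the ideal velocity field satisfies
`v*_t(x) = -(1/(2t(1-t))) ∇_x f_t(x)`. -/
theorem stmt6 {d : ℕ} (hd : 1 ≤ d) (μ : Measure (EuclideanSpace ℝ (Fin d)))
    [IsProbabilityMeasure μ] (hsupp : IsCompact (mSupport μ))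
    (t : ℝ) (ht : t ∈ Ioo (0 : ℝ) 1) :
    ∀ x : EuclideanSpace ℝ (Fin d),
      DifferentiableAt ℝ (homotopyObj μ t) x ∧
      idealVel μ t x = (-(1 / (2 * t * (1 - t)))) • gradient (homotopyObj μ t) x := by
  obtain ⟨ht0, ht1⟩ := ht
  have hσ : 0 < 1 - t := by linarith
  have hfun : homotopyObj μ t = fun x => -2 * (1 - t) ^ 2 *
      Real.log (∫ y, Real.exp (-‖x - t • y‖ ^ 2 / (2 * (1 - t) ^ 2)) ∂μ)
      - (1 - t) * ‖x‖ ^ 2 := by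
    funext x
    unfold homotopyObj smDist2
    congr 2
    rw [MeasureTheory.integral_map (by fun_prop) (Continuous.aestronglyMeasurable (by fun_prop))]
    congr 1
    refine integral_congr_ae (Filter.Eventually.of_forall fun y => ?_)
    show Real.exp (-‖t • y - x‖ ^ 2 / (2 * (1 - t) ^ 2))
        = Real.exp (-‖x - t • y‖ ^ 2 / (2 * (1 - t) ^ 2))
    rw [norm_sub_rev]
  intro x
  have hgrad : HasGradientAt (homotopyObj μ t) ((2 * t) • (x - postMean μ t x)) x := by
    rw [hfun]; exact main_grad μ t ⟨ht0, ht1⟩ x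
  refine ⟨hgrad.differentiableAt, ?_⟩
  rw [hgrad.gradient]
  show (1 - t)⁻¹ • (postMean μ t x - x) = _
  rw [smul_smul]
  have hc : -(1 / (2 * t * (1 - t))) * (2 * t) = -(1 - t)⁻¹ := by
    field_simp
  rw [hc, neg_smul, ← smul_neg, neg_sub]
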